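/- arXiv:2008.00225 — 2 statements merged into one kernel-verified Lean document; each statement's English description precedes it below -/
import Mathlib

section
/- If H is a spanning subgraph of a graph G, then γ_s(G) ≤ γ_s(H). -/
open Finset

variable {V : Type*}

/-- `S` is a dominating set of `G`. -/
def Dominating (G : SimpleGraph V) (S : Set V) : Prop :=
  ∀ v, v ∉ S → ∃ u ∈ S, G.Adj u v

/-- `S` is a secure dominating set of `G`. -/
def SecureDominating (G : SimpleGraph V) (S : Set V) : Prop :=
  Dominating G S ∧ ∀ v, v ∉ S → ∃ u ∈ S, G.Adj u v ∧ Dominating G ((S \ {u}) ∪ {v})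

/-- The domination number `γ(G)`. -/
noncomputable def domNum (G : SimpleGraph V) : ℕ :=
  sInf {n | ∃ S : Set V, Dominating G S ∧ S.ncard = n}

/-- The secure domination number `γ_s(G)`. -/
noncomputable def secDomNum (G : SimpleGraph V) : ℕ :=
  sInf {n | ∃ S : Set V, SecureDominating G S ∧ S.ncard = n}

/-- `v` is undefended with respect to the guard function `f`. -/
def Undefended (G : SimpleGraph V) (f : V → ℕ) (v : V) : Prop :=
  f v = 0 ∧ ∀ u, G.Adj u v → f u = 0

/-- `f` is a weak Roman dominating function on `G`. -/
def IsWRDF [DecidableEq V] (G : SimpleGraph V) (f : V → ℕ) : Prop :=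
  (∀ v, f v ≤ 2) ∧ ∀ v, f v = 0 → ∃ u, G.Adj u v ∧ 1 ≤ f u ∧
    ∀ w, ¬ Undefended G (Function.update (Function.update f u (f u - 1)) v 1) w

/-- The weak Roman domination number `γ_r(G)`. -/
noncomputable def weakRomanNum [Fintype V] [DecidableEq V] (G : SimpleGraph V) : ℕ :=
  sInf {n | ∃ f : V → ℕ, IsWRDF G f ∧ ∑ v, f v = n}

theorem Dominating.mono {G H : SimpleGraph V} {S : Set V} (h : H ≤ G) (hS : Dominating H S) :
    Dominating G S :=
  fun v hv => (hS v hv).imp fun _ hu => ⟨hu.1, h hu.2⟩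

theorem SecureDominating.mono {G H : SimpleGraph V} {S : Set V} (h : H ≤ G)
    (hS : SecureDominating H S) : SecureDominating G S :=
  ⟨hS.1.mono h, fun v hv => (hS.2 v hv).imp fun _ hu =>
    ⟨hu.1, h hu.2.1, hu.2.2.mono h⟩⟩

theorem secureDominating_univ (G : SimpleGraph V) : SecureDominating G Set.univ :=
  ⟨fun v hv => absurd (Set.mem_univ v) hv, fun v hv => absurd (Set.mem_univ v) hv⟩

-- `Set.univ` keeps the infimum in `secDomNum` away from the junk value `sInf ∅ = 0`.
theorem exists_secureDominating_ncard_eq_secDomNum (G : SimpleGraph V) :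
    ∃ S : Set V, SecureDominating G S ∧ S.ncard = secDomNum G :=
  Nat.sInf_mem (s := {n | ∃ S : Set V, SecureDominating G S ∧ S.ncard = n})
    ⟨_, Set.univ, secureDominating_univ G, rfl⟩

theorem secDomNum_le_ncard {G : SimpleGraph V} {S : Set V} (hS : SecureDominating G S) :
    secDomNum G ≤ S.ncard :=
  Nat.sInf_le ⟨S, hS, rfl⟩

theorem stmt3 {V : Type*} (G H : SimpleGraph V) (h : H ≤ G) :
    secDomNum G ≤ secDomNum H := by
  obtain ⟨S, hS, hcard⟩ := exists_secureDominating_ncard_eq_secDomNum H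
  exact hcard ▸ secDomNum_le_ncard (hS.mono h)
end

section
/- If no component of a graph G is a complete graph, then γ_s(G) ≤ n(G) − γ(G) − τ(G), where τ(G) is the maximum of |T(S)| over all minimum dominating sets S, with T(S) the set of vertices outside S having a true twin in S. -/
open Finset

variable {V : Type*}

/-- The closed neighbourhood of a vertex. -/
def closedNbr (G : SimpleGraph V) (v : V) : Set V := insert v (G.neighborSet v)

/-- No connected component of `G` is a complete graph: every component contains
two distinct non-adjacent vertices. -/
def NoCompleteComponent (G : SimpleGraph V) : Prop :=
  ∀ v : V, ∃ u w, G.Reachable v u ∧ G.Reachable v w ∧ u ≠ w ∧ ¬ G.Adj u w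

/-- `T(S)`: the vertices outside `S` having a true twin in `S`. -/
def trueTwinSet (G : SimpleGraph V) (S : Set V) : Set V :=
  {v | v ∉ S ∧ ∃ s ∈ S, closedNbr G v = closedNbr G s}

/-- `τ(G)`: the maximum of `|T(S)|` over all minimum dominating sets `S`. -/
noncomputable def tauNum (G : SimpleGraph V) : ℕ :=
  sSup {n | ∃ S : Set V, Dominating G S ∧ S.ncard = domNum G ∧
    (trueTwinSet G S).ncard = n}

/-!
Take a minimum dominating set `S` realising `τ(G)` and let `W` be the complement of `S ∪ T(S)`,
so `|W| = n - γ - τ`. Every `x ∈ S ∪ T(S)` is a true twin of some `s ∈ S`, and `s` has a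
neighbour `u ∈ W` whose guard can move to `x`: `x` then covers `N[s]`, and every other vertex
of `S ∪ T(S)` keeps a neighbour in `W ∖ {u}`. If no such `u` existed, each candidate `u` would
be the only `W`-neighbour of some `z u ∈ S`, and trading the `z u` for the `u` would make `s`
redundant, against the minimality of `S`. So `W` is secure dominating.
-/

/-- `S ∪ T(S)`. -/
def twinClosure (G : SimpleGraph V) (S : Set V) : Set V :=
  {x | ∃ s ∈ S, closedNbr G x = closedNbr G s}

section ClosedNbr

variable {G : SimpleGraph V} {v w x : V}

lemma mem_closedNbr : w ∈ closedNbr G v ↔ w = v ∨ G.Adj v w := by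
  simp [closedNbr]

lemma self_mem_closedNbr (v : V) : v ∈ closedNbr G v :=
  mem_closedNbr.mpr (Or.inl rfl)

lemma mem_closedNbr_of_adj (h : G.Adj v w) : w ∈ closedNbr G v :=
  mem_closedNbr.mpr (Or.inr h)

lemma mem_closedNbr_comm : w ∈ closedNbr G v ↔ v ∈ closedNbr G w := by
  simp only [mem_closedNbr, eq_comm, G.adj_comm]

lemma adj_of_mem_closedNbr (h : w ∈ closedNbr G v) (hne : w ≠ v) : G.Adj v w :=
  (mem_closedNbr.mp h).resolve_left hne

lemma adj_of_closedNbr_eq (h : closedNbr G v = closedNbr G w) (hx : x ∈ closedNbr G w)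
    (hne : x ≠ v) : G.Adj v x :=
  adj_of_mem_closedNbr (h ▸ hx) hne

-- Otherwise the component of `v` would be the clique `N[v]`.
lemma exists_adj_closedNbr_ne (hnc : NoCompleteComponent G) (v : V) :
    ∃ w, G.Adj v w ∧ closedNbr G w ≠ closedNbr G v := by
  by_contra! htwin
  have hreach : ∀ x, Relation.ReflTransGen G.Adj v x → x ∈ closedNbr G v := fun x hx ↦ by
    induction hx with
    | refl => exact self_mem_closedNbr v
    | tail _ hab ih =>
      rcases mem_closedNbr.mp ih with rfl | hva
      · exact mem_closedNbr_of_adj hab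
      · exact htwin _ hva ▸ mem_closedNbr_of_adj hab
  obtain ⟨u, w, hu, hw, hne, hnadj⟩ := hnc v
  rw [SimpleGraph.reachable_iff_reflTransGen] at hu hw
  rcases mem_closedNbr.mp (hreach u hu) with rfl | hvu
  · exact hnadj (adj_of_mem_closedNbr (hreach w hw) hne.symm)
  · exact hnadj (adj_of_closedNbr_eq (htwin u hvu) (hreach w hw) hne.symm)

end ClosedNbr

section TwinClosure

variable {G : SimpleGraph V} {S : Set V}

lemma subset_twinClosure : S ⊆ twinClosure G S :=
  fun s hs => ⟨s, hs, rfl⟩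

lemma union_trueTwinSet_eq_twinClosure : S ∪ trueTwinSet G S = twinClosure G S := by
  ext x
  constructor
  · rintro (hx | ⟨-, hx⟩)
    exacts [subset_twinClosure hx, hx]
  · intro hx
    by_cases hxS : x ∈ S
    exacts [Or.inl hxS, Or.inr ⟨hxS, hx⟩]

lemma ncard_twinClosure [Finite V] :
    (twinClosure G S).ncard = S.ncard + (trueTwinSet G S).ncard := by
  rw [← union_trueTwinSet_eq_twinClosure, Set.ncard_union_eq]
  exact Set.disjoint_left.mpr fun _ hS hT => hT.1 hS

end TwinClosure

lemma ncard_diff_insert_image_union [Finite V] {S U : Set V} {s : V} {z : V → V}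
    (hs : s ∈ S) (hz : Set.MapsTo z U (S \ {s})) (hinj : Set.InjOn z U) (hSU : Disjoint S U) :
    ((S \ insert s (z '' U)) ∪ U).ncard + 1 = S.ncard := by
  have hsub : insert s (z '' U) ⊆ S :=
    Set.insert_subset hs (hz.image_subset.trans Set.sdiff_subset)
  have hsZ : s ∉ z '' U := fun ⟨u, hu, hzu⟩ => (hz hu).2 hzu
  have hdisj : Disjoint (S \ insert s (z '' U)) U := hSU.mono_left Set.sdiff_subset
  rw [Set.ncard_union_eq hdisj, Set.ncard_sdiff hsub, Set.ncard_insert_of_notMem hsZ,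
    hinj.ncard_image]
  have := Set.ncard_le_ncard hsub
  rw [Set.ncard_insert_of_notMem hsZ, hinj.ncard_image] at this
  omega

section Domination

variable {G : SimpleGraph V}

lemma domNum_le {S : Set V} (hS : Dominating G S) : domNum G ≤ S.ncard :=
  Nat.sInf_le ⟨S, hS, rfl⟩

lemma exists_dominating_ncard_eq_domNum (G : SimpleGraph V) :
    ∃ S : Set V, Dominating G S ∧ S.ncard = domNum G :=
  Nat.sInf_mem (s := {n | ∃ S : Set V, Dominating G S ∧ S.ncard = n})
    ⟨_, Set.univ, fun v hv => absurd (Set.mem_univ v) hv, rfl⟩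

lemma exists_dominating_ncard_trueTwinSet_eq_tauNum [Finite V] (G : SimpleGraph V) :
    ∃ S : Set V, Dominating G S ∧ S.ncard = domNum G ∧
      (trueTwinSet G S).ncard = tauNum G := by
  obtain ⟨S, hS, hmin⟩ := exists_dominating_ncard_eq_domNum G
  refine Nat.sSup_mem (s := {n | ∃ S : Set V, Dominating G S ∧ S.ncard = domNum G ∧
    (trueTwinSet G S).ncard = n}) ⟨_, S, hS, hmin, rfl⟩ ⟨Nat.card V, ?_⟩
  rintro n ⟨S, -, -, rfl⟩
  exact Set.ncard_le_card _

end Domination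

section MinimumDominating

variable [Finite V] {G : SimpleGraph V} {S : Set V} {s : V}

lemma not_dominating_diff_singleton (hmin : S.ncard = domNum G) (hs : s ∈ S) :
    ¬ Dominating G (S \ {s}) := fun h => by
  have := domNum_le h
  have := Set.ncard_sdiff_singleton_add_one hs
  omega

lemma exists_adj_notMem_twinClosure (hnc : NoCompleteComponent G) (hS : Dominating G S)
    (hmin : S.ncard = domNum G) (hs : s ∈ S) :
    ∃ u ∉ twinClosure G S, G.Adj s u := by
  by_contra! hN
  replace hN : ∀ u, G.Adj s u → u ∈ twinClosure G S := fun u hsu =>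
    by_contra fun hu => hN u hu hsu
  -- a neighbour of `s` that is not its twin yields `x ∈ S` adjacent to `s`,
  -- which lets `S ∖ {s}` dominate
  obtain ⟨t, hst, hts⟩ := exists_adj_closedNbr_ne hnc s
  obtain ⟨x, hxS, htx⟩ := hN t hst
  have hxs : G.Adj x s :=
    adj_of_closedNbr_eq htx.symm (mem_closedNbr_of_adj hst.symm) (by rintro rfl; exact hts htx)
  refine not_dominating_diff_singleton hmin hs fun w hw => ?_
  by_cases hws : w = s
  · exact ⟨x, ⟨hxS, hxs.ne⟩, hws ▸ hxs⟩
  have hwS : w ∉ S := fun h => hw ⟨h, hws⟩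
  obtain ⟨y, hyS, hyw⟩ := hS w hwS
  by_cases hys : y = s
  swap
  · exact ⟨y, ⟨hyS, hys⟩, hyw⟩
  subst hys
  obtain ⟨r, hrS, hwr⟩ := hN w hyw
  by_cases hry : r = y
  · subst hry
    exact ⟨x, ⟨hxS, hxs.ne⟩,
      (adj_of_closedNbr_eq hwr (mem_closedNbr_of_adj hxs.symm)
        (ne_of_mem_of_not_mem hxS hwS)).symm⟩
  · exact ⟨r, ⟨hrS, hry⟩,
      (adj_of_closedNbr_eq hwr (self_mem_closedNbr r) (ne_of_mem_of_not_mem hrS hwS)).symm⟩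

lemma exists_defender (hnc : NoCompleteComponent G)
    (hS : Dominating G S) (hmin : S.ncard = domNum G) (hs : s ∈ S) :
    ∃ u ∉ twinClosure G S, G.Adj s u ∧ ∀ z ∈ twinClosure G S, z ∉ closedNbr G s →
      ∃ w ∉ twinClosure G S, G.Adj z w ∧ w ≠ u := by
  by_contra! hcon
  set C := twinClosure G S
  set U : Set V := {u | u ∉ C ∧ G.Adj s u}
  have hblock : ∀ u ∈ U, ∃ z ∈ S, z ∉ closedNbr G s ∧ G.Adj z u ∧
      ∀ w ∉ C, G.Adj z w → w = u := by
    rintro u ⟨huC, hsu⟩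
    obtain ⟨z, hzC, hzs, hpriv⟩ := hcon u huC hsu
    have ⟨r, hrS, hzr⟩ := hzC
    have hrpriv : ∀ w ∉ C, G.Adj r w → w = u := fun w hwC hrw =>
      hpriv w hwC (adj_of_closedNbr_eq hzr (mem_closedNbr_of_adj hrw)
        (ne_of_mem_of_not_mem hzC hwC).symm)
    obtain ⟨w, hwC, hrw⟩ := exists_adj_notMem_twinClosure hnc hS hmin hrS
    refine ⟨r, hrS, ?_, hrpriv w hwC hrw ▸ hrw, hrpriv⟩
    rwa [mem_closedNbr_comm, ← hzr, ← mem_closedNbr_comm]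
  choose! z hzS hzs hzu hzpriv using hblock
  obtain ⟨u₀, hu₀C, hsu₀⟩ := exists_adj_notMem_twinClosure hnc hS hmin hs
  set D := (S \ insert s (z '' U)) ∪ U
  have hcov : ∀ t ∈ S, t ∈ D ∨ ∃ u ∈ U, G.Adj t u := by
    intro t ht
    by_cases hts : t = s
    · exact Or.inr ⟨u₀, ⟨hu₀C, hsu₀⟩, hts ▸ hsu₀⟩
    by_cases htZ : t ∈ z '' U
    · obtain ⟨u, hu, rfl⟩ := htZ
      exact Or.inr ⟨u, hu, hzu u hu⟩
    · exact Or.inl (Or.inl ⟨ht, by simp [hts, htZ]⟩)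
  have hD : Dominating G D := by
    intro w hwD
    by_cases hwC : w ∈ C
    · have ⟨t, htS, hwt⟩ := hwC
      rcases hcov t htS with htD | ⟨u, hu, htu⟩
      · exact ⟨t, htD,
          (adj_of_closedNbr_eq hwt (self_mem_closedNbr t) (ne_of_mem_of_not_mem htD hwD)).symm⟩
      · exact ⟨u, Or.inr hu,
          (adj_of_closedNbr_eq hwt (mem_closedNbr_of_adj htu)
            (ne_of_mem_of_not_mem hwC hu.1).symm).symm⟩
    · obtain ⟨y, hyS, hyw⟩ := hS w fun h => hwC (subset_twinClosure h)
      refine ⟨y, Or.inl ⟨hyS, ?_⟩, hyw⟩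
      rintro (rfl | ⟨u, hu, rfl⟩)
      · exact hwD (Or.inr ⟨hwC, hyw⟩)
      · exact hwD (Or.inr (hzpriv u hu w hwC hyw ▸ hu))
  have hcard : D.ncard + 1 = S.ncard := by
    refine ncard_diff_insert_image_union hs (fun u hu => ⟨hzS u hu, ?_⟩) ?_ ?_
    · rintro rfl
      exact hzs u hu (self_mem_closedNbr _)
    · exact fun a ha b hb hab => hzpriv b hb a ha.1 (hab ▸ hzu a ha)
    · exact Set.disjoint_right.mpr fun u hu huS => hu.1 (subset_twinClosure huS)
  have := domNum_le hD
  omega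

theorem secureDominating_compl_twinClosure (hnc : NoCompleteComponent G)
    (hS : Dominating G S) (hmin : S.ncard = domNum G) :
    SecureDominating G (twinClosure G S)ᶜ := by
  have hdef : ∀ v ∉ (twinClosure G S)ᶜ, ∃ u ∈ (twinClosure G S)ᶜ, G.Adj u v ∧
      Dominating G (((twinClosure G S)ᶜ \ {u}) ∪ {v}) := by
    intro v hv
    rw [Set.notMem_compl_iff] at hv
    have ⟨s, hsS, hvs⟩ := hv
    obtain ⟨u, huC, hsu, hdef⟩ := exists_defender hnc hS hmin hsS
    have hvu : G.Adj v u :=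
      adj_of_closedNbr_eq hvs (mem_closedNbr_of_adj hsu) (ne_of_mem_of_not_mem hv huC).symm
    refine ⟨u, huC, hvu.symm, fun x hx => ?_⟩
    by_cases hvx : G.Adj v x
    · exact ⟨v, Or.inr rfl, hvx⟩
    have hxC : x ∈ twinClosure G S := by
      by_contra hxC
      exact hx (Or.inl ⟨hxC, by rintro rfl; exact hvx hvu⟩)
    have hxs : x ∉ closedNbr G s := by
      rw [← hvs, mem_closedNbr]
      rintro (rfl | h)
      exacts [hx (Or.inr rfl), hvx h]
    obtain ⟨w, hwC, hxw, hwu⟩ := hdef x hxC hxs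
    exact ⟨w, Or.inl ⟨hwC, hwu⟩, hxw.symm⟩
  exact ⟨fun v hv => (hdef v hv).imp fun _ hu => ⟨hu.1, hu.2.1⟩, hdef⟩

end MinimumDominating

theorem stmt13 {V : Type*} [Fintype V] (G : SimpleGraph V)
    (hnc : NoCompleteComponent G) :
    secDomNum G ≤ Fintype.card V - domNum G - tauNum G := by
  obtain ⟨S, hS, hmin, hτ⟩ := exists_dominating_ncard_trueTwinSet_eq_tauNum G
  have hsec : secDomNum G ≤ (twinClosure G S)ᶜ.ncard :=
    Nat.sInf_le ⟨_, secureDominating_compl_twinClosure hnc hS hmin, rfl⟩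
  have hsplit := Set.ncard_add_ncard_compl (twinClosure G S)
  rw [ncard_twinClosure, hmin, hτ, Nat.card_eq_fintype_card] at hsplit
  omega
end
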